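/- In the three-armed bandit instance, removing mass from the uninformative arm does not increase the optimistic-DEC objective: Let 0 < ε < Δ ≤ 1/16 and η > 0. Consider actions A = {1, 2, 3} and mean-reward vectors V₁ = (1/2 − Δ, 1/2 + Δ, ε/2) and V₂ = (1/2 + Δ, 1/2 − Δ, ε/2), indexed by i ∈ {1, 2}. For p ∈ Δ(A), ρ ∈ Δ({1, 2}), ν ∈ Δ({1, 2}) define Ob(p, ρ, ν) = Σ_{a∈A} p(a) · Σ_{i∈{1,2}} ρ(i) · Σ_{j∈{1,2}} ν(j) · [ (1/2 + Δ) − V_j(a) − (1/η)·(V_i(a) − V_j(a))² ]. For p ∈ Δ(A), define p̃ ∈ Δ(A) by p̃ = ( p(1)/(1 − p(3)), p(2)/(1 − p(3)), 0 ) if p(3) < 1, and p̃ = (1/2, 1/2, 0) if p(3) = 1. Then for all p ∈ Δ(A), ρ ∈ Δ({1, 2}), and ν ∈ Δ({1, 2}), Ob(p̃, ρ, ν) ≤ Ob(p, ρ, ν). -/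

import Mathlib

open Finset

/-- Mean-reward vectors of the two models of the three-armed bandit instance:
`V₁ = (1/2 − Δ, 1/2 + Δ, ε/2)` and `V₂ = (1/2 + Δ, 1/2 − Δ, ε/2)`. -/
noncomputable def banditV (ε Δ : ℝ) : Fin 2 → Fin 3 → ℝ :=
  ![![1 / 2 - Δ, 1 / 2 + Δ, ε / 2], ![1 / 2 + Δ, 1 / 2 - Δ, ε / 2]]

/-- The optimistic-DEC objective
`Ob(p, ρ, ν) = Σ_a p(a) Σ_i ρ(i) Σ_j ν(j) [ (1/2 + Δ) − V_j(a) − (1/η)(V_i(a) − V_j(a))² ]`. -/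
noncomputable def banditOb (ε Δ η : ℝ) (p : Fin 3 → ℝ) (ρ ν : Fin 2 → ℝ) : ℝ :=
  ∑ a : Fin 3, p a * ∑ i : Fin 2, ρ i * ∑ j : Fin 2, ν j *
    ((1 / 2 + Δ) - banditV ε Δ j a - (1 / η) * (banditV ε Δ i a - banditV ε Δ j a) ^ 2)

/-- The modification `p̃` of `p` that removes all mass from the third (uninformative) arm:
`p̃ = (p(1)/(1 − p(3)), p(2)/(1 − p(3)), 0)` if `p(3) < 1`, and `(1/2, 1/2, 0)` otherwise. -/
noncomputable def banditTilde (p : Fin 3 → ℝ) : Fin 3 → ℝ :=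
  if p 2 < 1 then ![p 0 / (1 - p 2), p 1 / (1 - p 2), 0] else ![1 / 2, 1 / 2, 0]

/-! Conditioning `p` on the informative arms `{0, 1}` can only lower a linear objective whose
coefficient on arm `2` dominates the other two: `Ob(p, ·)` is a convex combination of `Ob(p̃, ·)`
and the coefficient of arm `2`. In the bandit instance the coefficients of the informative arms
are at most `2Δ` (regret at most `2Δ`, penalty nonnegative), while that of arm `2` is
`1/2 + Δ − ε/2 ≥ 2Δ`. -/

lemma sum_mul_const_of_mem_stdSimplex {ι : Type*} [Fintype ι] {w : ι → ℝ}
    (hw : w ∈ stdSimplex ℝ ι) (C : ℝ) : ∑ i, w i * C = C := by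
  rw [← sum_mul, hw.2, one_mul]

lemma sum_mul_le_of_mem_stdSimplex {ι : Type*} [Fintype ι] {w : ι → ℝ}
    (hw : w ∈ stdSimplex ℝ ι) {x : ι → ℝ} {C : ℝ} (hx : ∀ i, x i ≤ C) :
    ∑ i, w i * x i ≤ C :=
  calc ∑ i, w i * x i ≤ ∑ i, w i * C :=
        sum_le_sum fun i _ => mul_le_mul_of_nonneg_left (hx i) (hw.1 i)
    _ = C := sum_mul_const_of_mem_stdSimplex hw C

lemma sum_banditTilde_mul_le {p : Fin 3 → ℝ} (hp : p ∈ stdSimplex ℝ (Fin 3)) {c : Fin 3 → ℝ}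
    (hc₀ : c 0 ≤ c 2) (hc₁ : c 1 ≤ c 2) :
    ∑ a, banditTilde p a * c a ≤ ∑ a, p a * c a := by
  obtain ⟨hp_nonneg, hp_sum⟩ := hp
  rw [Fin.sum_univ_three] at hp_sum
  have h₀ := hp_nonneg 0
  have h₁ := hp_nonneg 1
  rw [Fin.sum_univ_three, Fin.sum_univ_three, banditTilde]
  split_ifs with h₂
  · have hpos : 0 < 1 - p 2 := by linarith
    set m := (p 0 * c 0 + p 1 * c 1) / (1 - p 2) with hm
    have hm_le : m ≤ c 2 := by
      rw [hm, div_le_iff₀ hpos, show 1 - p 2 = p 0 + p 1 by linarith]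
      linarith [mul_le_mul_of_nonneg_left hc₀ h₀, mul_le_mul_of_nonneg_left hc₁ h₁]
    calc _ = (1 - p 2) * m + p 2 * m := by
          simp only [Matrix.cons_val_zero, Matrix.cons_val_one, Matrix.cons_val, zero_mul,
            add_zero, hm]
          ring
      _ ≤ (1 - p 2) * m + p 2 * c 2 := by gcongr; exact hp_nonneg 2
      _ = p 0 * c 0 + p 1 * c 1 + p 2 * c 2 := by rw [hm, mul_div_cancel₀ _ hpos.ne']
  · have hp₂ : p 2 = 1 := le_antisymm (by linarith) (not_lt.mp h₂)
    have hp₀ : p 0 = 0 := by linarith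
    have hp₁ : p 1 = 0 := by linarith
    simp only [Matrix.cons_val_zero, Matrix.cons_val_one, Matrix.cons_val_two,
      Matrix.head_cons, Matrix.tail_cons, hp₀, hp₁, hp₂]
    linarith

noncomputable def banditArmObjective (ε Δ η : ℝ) (ρ ν : Fin 2 → ℝ) (a : Fin 3) : ℝ :=
  ∑ i : Fin 2, ρ i * ∑ j : Fin 2, ν j *
    ((1 / 2 + Δ) - banditV ε Δ j a - (1 / η) * (banditV ε Δ i a - banditV ε Δ j a) ^ 2)

lemma banditOb_eq_sum (ε Δ η : ℝ) (p : Fin 3 → ℝ) (ρ ν : Fin 2 → ℝ) :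
    banditOb ε Δ η p ρ ν = ∑ a, p a * banditArmObjective ε Δ η ρ ν a :=
  rfl

lemma one_half_sub_le_banditV {ε Δ : ℝ} (hΔ : 0 ≤ Δ) (j : Fin 2) {a : Fin 3} (ha : a ≠ 2) :
    1 / 2 - Δ ≤ banditV ε Δ j a := by
  fin_cases j <;> fin_cases a <;> simp_all [banditV] <;> linarith

lemma banditArmObjective_le {ε Δ η : ℝ} (hΔ : 0 ≤ Δ) (hη : 0 ≤ η) {ρ ν : Fin 2 → ℝ}
    (hρ : ρ ∈ stdSimplex ℝ (Fin 2)) (hν : ν ∈ stdSimplex ℝ (Fin 2)) {a : Fin 3} (ha : a ≠ 2) :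
    banditArmObjective ε Δ η ρ ν a ≤ 2 * Δ := by
  refine sum_mul_le_of_mem_stdSimplex hρ fun i => sum_mul_le_of_mem_stdSimplex hν fun j => ?_
  have hV := one_half_sub_le_banditV (ε := ε) hΔ j ha
  have hpenalty : 0 ≤ 1 / η * (banditV ε Δ i a - banditV ε Δ j a) ^ 2 := by positivity
  linarith

lemma banditArmObjective_two (ε Δ η : ℝ) {ρ ν : Fin 2 → ℝ}
    (hρ : ρ ∈ stdSimplex ℝ (Fin 2)) (hν : ν ∈ stdSimplex ℝ (Fin 2)) :
    banditArmObjective ε Δ η ρ ν 2 = 1 / 2 + Δ - ε / 2 := by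
  have hV : ∀ j, banditV ε Δ j 2 = ε / 2 := by
    intro j; fin_cases j <;> rfl
  simp only [banditArmObjective, hV, sub_self, sum_mul_const_of_mem_stdSimplex hν,
    sum_mul_const_of_mem_stdSimplex hρ]
  ring

/-- In the three-armed bandit instance, removing mass from the uninformative arm does not
increase the optimistic-DEC objective: for `0 < ε < Δ ≤ 1/16`, `η > 0`, and all
`p ∈ Δ({1,2,3})`, `ρ, ν ∈ Δ({1,2})`, `Ob(p̃, ρ, ν) ≤ Ob(p, ρ, ν)`. -/
theorem banditOb_tilde_le (ε Δ η : ℝ) (hε : 0 < ε) (hεΔ : ε < Δ) (hΔ : Δ ≤ 1 / 16)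
    (hη : 0 < η)
    (p : Fin 3 → ℝ) (hp : p ∈ stdSimplex ℝ (Fin 3))
    (ρ ν : Fin 2 → ℝ) (hρ : ρ ∈ stdSimplex ℝ (Fin 2)) (hν : ν ∈ stdSimplex ℝ (Fin 2)) :
    banditOb ε Δ η (banditTilde p) ρ ν ≤ banditOb ε Δ η p ρ ν := by
  have hΔ₀ : 0 ≤ Δ := by linarith
  have h₂ : 2 * Δ ≤ banditArmObjective ε Δ η ρ ν 2 := by
    rw [banditArmObjective_two ε Δ η hρ hν]
    linarith
  rw [banditOb_eq_sum, banditOb_eq_sum]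
  exact sum_banditTilde_mul_le hp
    ((banditArmObjective_le hΔ₀ hη.le hρ hν (by decide)).trans h₂)
    ((banditArmObjective_le hΔ₀ hη.le hρ hν (by decide)).trans h₂)
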